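/- Fix σ > 0 and let q(ν) := φ(z + ν u) where φ(u') := (1/2)‖D*(u') − z‖² − (σ⁴/2)‖∇h_σ(u')‖² + σ² h_σ(u'), with D*(u') = u' − σ²∇h_σ(u') and h_σ twice differentiable satisfying I − σ² H h_σ(u') ≻ 0 for all u'. Then q'(ν) = ν uᵀ[J D*(z + νu)]u, hence q'(ν) < 0 for ν < 0 and q'(ν) > 0 for ν > 0 whenever u ≠ 0; consequently ν = 0 is the unique global minimizer of q and z is the unique stationary point and strict global minimizer of φ. -/

import Mathlib

/-!
The differential of `φ` at `w` is `v ↦ ⟪w - z, J D*(w) v⟫`: differentiating the `σ⁴` term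
cancels exactly the cross terms coming from `σ² h_σ` and from `D*`. Along the ray `z + ν u` this
gives `q'(ν) = ν ⟪u, J D*(z + ν u) u⟫`, which has the sign of `ν` because `J D*` is positive
definite; so `q` is strictly decreasing on `ν ≤ 0` and strictly increasing on `ν ≥ 0`. Testing the
differential at a critical point `w` against `w - z` forces `w = z`.
-/

open scoped RealInnerProductSpace

lemma lt_of_hasDerivAt_mul_pos {f p : ℝ → ℝ} (hf : ∀ t, HasDerivAt f (t * p t) t)
    (hp : ∀ t, 0 < p t) {t : ℝ} (ht : t ≠ 0) : f 0 < f t := by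
  have hcont : Continuous f := continuous_iff_continuousAt.2 fun t => (hf t).continuousAt
  rcases ht.lt_or_gt with hneg | hpos
  · have hanti : StrictAntiOn f (Set.Iic 0) :=
      strictAntiOn_of_deriv_neg (convex_Iic 0) hcont.continuousOn fun s hs => by
        rw [interior_Iic] at hs
        exact (hf s).deriv ▸ mul_neg_of_neg_of_pos hs (hp s)
    exact hanti (Set.mem_Iic.2 hneg.le) (Set.mem_Iic.2 le_rfl) hneg
  · have hmono : StrictMonoOn f (Set.Ici 0) :=
      strictMonoOn_of_deriv_pos (convex_Ici 0) hcont.continuousOn fun s hs => by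
        rw [interior_Ici] at hs
        exact (hf s).deriv ▸ mul_pos hs (hp s)
    exact hmono (Set.mem_Ici.2 le_rfl) (Set.mem_Ici.2 hpos.le) hpos

variable {E : Type*} [NormedAddCommGroup E] [InnerProductSpace ℝ E]

noncomputable def gribonvalPotential (σ : ℝ) (h : E → ℝ) (G : E → E) (z w : E) : ℝ :=
  1 / 2 * ‖w - σ ^ 2 • G w - z‖ ^ 2 - σ ^ 4 / 2 * ‖G w‖ ^ 2 + σ ^ 2 * h w

theorem hasFDerivAt_gribonvalPotential [CompleteSpace E] {σ : ℝ} {h : E → ℝ} {G : E → E}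
    {G' : E →L[ℝ] E} {z w : E} (hh : HasGradientAt h (G w) w) (hG : HasFDerivAt G G' w) :
    HasFDerivAt (gribonvalPotential σ h G z)
      ((innerSL ℝ (w - z)).comp (ContinuousLinearMap.id ℝ E - σ ^ 2 • G')) w := by
  have hD : HasFDerivAt (fun x => x - σ ^ 2 • G x - z)
      (ContinuousLinearMap.id ℝ E - σ ^ 2 • G') w :=
    ((hasFDerivAt_id w).sub (hG.const_smul _)).sub_const z
  refine (((hD.norm_sq.const_mul _).sub (hG.norm_sq.const_mul _)).add
    (hh.hasFDerivAt.const_mul _)).congr_fderiv ?_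
  ext v
  simp only [add_apply, sub_apply, smul_apply, ContinuousLinearMap.comp_apply, innerSL_apply_apply,
    InnerProductSpace.toDual_apply_apply, ContinuousLinearMap.id_apply, smul_eq_mul,
    inner_sub_left, inner_sub_right, real_inner_smul_left, real_inner_smul_right, nsmul_eq_mul]
  ring

section
variable {φ : E → ℝ} {A : E → E →L[ℝ] E} {z : E}
  (hφ : ∀ w, HasFDerivAt φ ((innerSL ℝ (w - z)).comp (A w)) w)
include hφ

theorem hasDerivAt_line_of_hasFDerivAt_innerSL_comp (u : E) (t : ℝ) :
    HasDerivAt (fun s : ℝ => φ (z + s • u)) (t * ⟪u, A (z + t • u) u⟫) t := by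
  have hline : HasDerivAt (fun s : ℝ => z + s • u) u t := by
    simpa using ((hasDerivAt_id t).smul_const u).const_add z
  refine ((hφ _).comp_hasDerivAt t hline).congr_deriv ?_
  simp

variable (hA : ∀ w v, v ≠ 0 → 0 < ⟪v, A w v⟫)
include hA

theorem lt_of_hasFDerivAt_innerSL_comp (w : E) (hw : w ≠ z) : φ z < φ w := by
  have hu : w - z ≠ 0 := sub_ne_zero.2 hw
  simpa using lt_of_hasDerivAt_mul_pos (hasDerivAt_line_of_hasFDerivAt_innerSL_comp hφ (w - z))
    (fun _ => hA _ _ hu) one_ne_zero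

theorem gradient_eq_zero_iff_of_hasFDerivAt_innerSL_comp [CompleteSpace E] (w : E) :
    gradient φ w = 0 ↔ w = z := by
  rw [gradient, LinearIsometryEquiv.map_eq_zero_iff, (hφ w).fderiv]
  refine ⟨fun h0 => ?_, fun hw => by simp [hw]⟩
  by_contra hw
  have hzero : ⟪w - z, A w (w - z)⟫ = 0 := DFunLike.congr_fun h0 (w - z)
  exact (hA w (w - z) (sub_ne_zero.2 hw)).ne' hzero

end

theorem gribonval_unique_stationary_point_general
    (d : ℕ) (σ : ℝ)
    (hσfun : EuclideanSpace ℝ (Fin d) → ℝ)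
    (Gh : EuclideanSpace ℝ (Fin d) → EuclideanSpace ℝ (Fin d))
    (hgrad : ∀ w, HasGradientAt hσfun (Gh w) w)
    (hGhdiff : Differentiable ℝ Gh)
    (hPD : ∀ w v, v ≠ 0 → 0 < ⟪v, v⟫ - σ ^ 2 * ⟪v, fderiv ℝ Gh w v⟫)
    (Dstar : EuclideanSpace ℝ (Fin d) → EuclideanSpace ℝ (Fin d))
    (hDstar : ∀ w, Dstar w = w - σ ^ 2 • Gh w)
    (z u : EuclideanSpace ℝ (Fin d))
    (φ : EuclideanSpace ℝ (Fin d) → ℝ)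
    (hφ : ∀ w, φ w = (1 / 2) * ‖Dstar w - z‖ ^ 2 -
      (σ ^ 4 / 2) * ‖Gh w‖ ^ 2 + σ ^ 2 * hσfun w)
    (q : ℝ → ℝ) (hq : ∀ ν, q ν = φ (z + ν • u)) :
    (∀ ν : ℝ, deriv q ν = ν * ⟪u, fderiv ℝ Dstar (z + ν • u) u⟫) ∧
    (u ≠ 0 → ∀ ν : ℝ, ν < 0 → deriv q ν < 0) ∧
    (u ≠ 0 → ∀ ν : ℝ, 0 < ν → 0 < deriv q ν) ∧
    (u ≠ 0 → ∀ ν : ℝ, ν ≠ 0 → q 0 < q ν) ∧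
    (∀ w, gradient φ w = 0 ↔ w = z) ∧
    (∀ w, w ≠ z → φ z < φ w) := by
  have hJD : ∀ w, fderiv ℝ Dstar w = ContinuousLinearMap.id ℝ _ - σ ^ 2 • fderiv ℝ Gh w := by
    intro w
    rw [funext hDstar]
    exact ((hasFDerivAt_id w).sub ((hGhdiff w).hasFDerivAt.const_smul (σ ^ 2))).fderiv
  have hJDpos : ∀ w v, v ≠ 0 → 0 < ⟪v, fderiv ℝ Dstar w v⟫ := by
    simpa [hJD, inner_sub_right, real_inner_smul_right] using hPD
  have hφ_eq : φ = gribonvalPotential σ hσfun Gh z := funext fun w => by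
    rw [hφ, hDstar, gribonvalPotential]
  have hφ' : ∀ w, HasFDerivAt φ ((innerSL ℝ (w - z)).comp (fderiv ℝ Dstar w)) w := by
    intro w
    rw [hφ_eq, hJD]
    exact hasFDerivAt_gribonvalPotential (hgrad w) (hGhdiff w).hasFDerivAt
  have hq' : ∀ ν, HasDerivAt q (ν * ⟪u, fderiv ℝ Dstar (z + ν • u) u⟫) ν := by
    rw [funext hq]
    exact hasDerivAt_line_of_hasFDerivAt_innerSL_comp hφ' u
  refine ⟨fun ν => (hq' ν).deriv, fun hu ν hν => ?_, fun hu ν hν => ?_, fun hu ν hν => ?_,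
    gradient_eq_zero_iff_of_hasFDerivAt_innerSL_comp hφ' hJDpos,
    lt_of_hasFDerivAt_innerSL_comp hφ' hJDpos⟩
  · rw [(hq' ν).deriv]
    exact mul_neg_of_neg_of_pos hν (hJDpos _ u hu)
  · rw [(hq' ν).deriv]
    exact mul_pos hν (hJDpos _ u hu)
  · exact lt_of_hasDerivAt_mul_pos hq' (fun _ => hJDpos _ u hu) hν

/-- Gribonval's argument that the MMSE denoiser is a proximal map: with
`D*(u') = u' − σ²∇h_σ(u')`, `I − σ²H h_σ(u') ≻ 0` everywhere, and
`φ(u') = (1/2)‖D*(u') − z‖² − (σ⁴/2)‖∇h_σ(u')‖² + σ² h_σ(u')`, the function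
`q(ν) = φ(z + νu)` satisfies `q'(ν) = ν uᵀ[J D*(z + νu)]u`, hence `q'(ν) < 0`
for `ν < 0` and `q'(ν) > 0` for `ν > 0` whenever `u ≠ 0`; consequently `ν = 0`
is the unique global minimizer of `q`, and `z` is the unique stationary point
and strict global minimizer of `φ`. -/
theorem gribonval_unique_stationary_point
    (d : ℕ) (σ : ℝ) (hσ : 0 < σ)
    (hσfun : EuclideanSpace ℝ (Fin d) → ℝ)
    (Gh : EuclideanSpace ℝ (Fin d) → EuclideanSpace ℝ (Fin d))
    (hgrad : ∀ w, HasGradientAt hσfun (Gh w) w)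
    (hGhdiff : Differentiable ℝ Gh)
    (hPD : ∀ w v, v ≠ 0 → 0 < ⟪v, v⟫ - σ ^ 2 * ⟪v, fderiv ℝ Gh w v⟫)
    (Dstar : EuclideanSpace ℝ (Fin d) → EuclideanSpace ℝ (Fin d))
    (hDstar : ∀ w, Dstar w = w - σ ^ 2 • Gh w)
    (z u : EuclideanSpace ℝ (Fin d))
    (φ : EuclideanSpace ℝ (Fin d) → ℝ)
    (hφ : ∀ w, φ w = (1 / 2) * ‖Dstar w - z‖ ^ 2 -
      (σ ^ 4 / 2) * ‖Gh w‖ ^ 2 + σ ^ 2 * hσfun w)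
    (q : ℝ → ℝ) (hq : ∀ ν, q ν = φ (z + ν • u)) :
    (∀ ν : ℝ, deriv q ν = ν * ⟪u, fderiv ℝ Dstar (z + ν • u) u⟫) ∧
    (u ≠ 0 → ∀ ν : ℝ, ν < 0 → deriv q ν < 0) ∧
    (u ≠ 0 → ∀ ν : ℝ, 0 < ν → 0 < deriv q ν) ∧
    (u ≠ 0 → ∀ ν : ℝ, ν ≠ 0 → q 0 < q ν) ∧
    (∀ w, gradient φ w = 0 ↔ w = z) ∧
    (∀ w, w ≠ z → φ z < φ w) :=
  gribonval_unique_stationary_point_general d σ hσfun Gh hgrad hGhdiff hPD Dstar hDstar z u φ hφ q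
    hq
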